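/- arXiv:0704.2868 — 2 statements merged into one kernel-verified Lean document; each statement's English description precedes it below -/
import Mathlib

section
/- Let G be a finite group acting transitively on a finite set M and A ⊆ M. Then there exists g ∈ G with |gA \ A| ≥ |A|·(1 − |A|/|M|). -/
/-!
Double counting: `∑_g |gA ∩ A| = ∑_{a ∈ A} #{g | g • a ∈ A}`, and by transitivity every fibre
`{g | g • a = b}` has `|G| / |M|` elements, so the sum equals `|A|² |G| / |M|`. Some `g` therefore
has `|gA ∩ A| ≤ |A|² / |M|`, and `|gA \ A| = |A| - |gA ∩ A|` because `g` acts injectively.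
-/

open Finset

lemma Finset.card_image_smul_inter {G M : Type*} [Group G] [MulAction G M] [DecidableEq M]
    (g : G) (A : Finset M) : #(A.image (g • ·) ∩ A) = #{a ∈ A | g • a ∈ A} := by
  rw [← filter_mem_eq_inter, filter_image, card_image_of_injective _ (MulAction.injective g)]

namespace MulAction

variable {G M : Type*} [Group G] [Fintype G] [DecidableEq M]
  [MulAction G M] [IsPretransitive G M]

lemma card_filter_smul_eq_eq (b a a' : M) :
    #{g : G | g • b = a} = #{g : G | g • b = a'} := by
  obtain ⟨h, rfl⟩ := exists_smul_eq G a a'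
  refine card_nbij' (h * ·) (h⁻¹ * ·) ?_ ?_ (fun _ _ => by simp) (fun _ _ => by simp) <;>
    intro g hg <;> simp_all [mul_smul]

lemma card_filter_smul_eq_mul_card [Fintype M] (b a : M) :
    #{g : G | g • b = a} * Fintype.card M = Fintype.card G := by
  calc #{g : G | g • b = a} * Fintype.card M
      = ∑ x : M, #{g : G | g • b = x} := by simp [card_filter_smul_eq_eq b _ a, mul_comm]
    _ = Fintype.card G := (card_eq_sum_card_fiberwise fun g _ => mem_coe.2 (mem_univ (g • b))).symm

lemma card_filter_smul_mem_mul_card [Fintype M] (b : M) (B : Finset M) :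
    #{g : G | g • b ∈ B} * Fintype.card M = #B * Fintype.card G := by
  have hmaps : ((univ.filter fun g : G => g • b ∈ B) : Set G).MapsTo (· • b) B :=
    fun g hg => (mem_filter.1 hg).2
  rw [card_eq_sum_card_fiberwise hmaps, sum_mul]
  calc ∑ x ∈ B, #{g ∈ {g : G | g • b ∈ B} | g • b = x} * Fintype.card M
      = ∑ x ∈ B, #{g : G | g • b = x} * Fintype.card M := by
        refine sum_congr rfl fun x hx => ?_
        rw [filter_filter]
        congr 2
        grind
    _ = #B * Fintype.card G := by simp [card_filter_smul_eq_mul_card]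

lemma sum_card_image_smul_inter_mul_card [Fintype M] (A : Finset M) :
    (∑ g : G, #(A.image (g • ·) ∩ A)) * Fintype.card M = #A ^ 2 * Fintype.card G := by
  have h := sum_card_bipartiteAbove_eq_sum_card_bipartiteBelow
    (s := univ) (t := A) (r := fun (g : G) a => g • a ∈ A)
  simp only [bipartiteAbove, bipartiteBelow] at h
  simp_rw [card_image_smul_inter, h, sum_mul, card_filter_smul_mem_mul_card, sum_const,
    smul_eq_mul, sq, mul_assoc]

lemma exists_card_image_smul_inter_mul_card_le [Fintype M] (A : Finset M) :
    ∃ g : G, #(A.image (g • ·) ∩ A) * Fintype.card M ≤ #A ^ 2 := by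
  have hsum : ∑ g : G, #(A.image (g • ·) ∩ A) * Fintype.card M ≤ ∑ _g : G, #A ^ 2 := by
    rw [← sum_mul, sum_card_image_smul_inter_mul_card, sum_const, card_univ, smul_eq_mul, mul_comm]
  obtain ⟨g, -, hg⟩ := exists_le_of_sum_le univ_nonempty hsum
  exact ⟨g, hg⟩

end MulAction

/-- For a finite group `G` acting transitively on a finite set `M` and `A ⊆ M`,
there exists `g ∈ G` with `|gA \ A| ≥ |A|·(1 − |A|/|M|)`. -/
theorem stmt_2 {G M : Type*} [Group G] [Fintype G] [Fintype M] [DecidableEq M]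
    [MulAction G M] [MulAction.IsPretransitive G M] (A : Finset M) :
    ∃ g : G, (((A.image (g • ·)) \ A).card : ℚ)
      ≥ (A.card : ℚ) * (1 - (A.card : ℚ) / (Fintype.card M : ℚ)) := by
  rcases A.eq_empty_or_nonempty with rfl | ⟨a, -⟩
  · exact ⟨1, by simp⟩
  have hM : (0 : ℚ) < Fintype.card M := by exact_mod_cast Fintype.card_pos_iff.2 ⟨a⟩
  obtain ⟨g, hg⟩ := MulAction.exists_card_image_smul_inter_mul_card_le (G := G) A
  refine ⟨g, ?_⟩
  have hsplit : #(A.image (g • ·) \ A) + #(A.image (g • ·) ∩ A) = #A := by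
    rw [card_sdiff_add_card_inter, card_image_of_injective _ (MulAction.injective g)]
  have hinter : (#(A.image (g • ·) ∩ A) : ℚ) ≤ #A ^ 2 / Fintype.card M := by
    rw [le_div_iff₀ hM]
    exact_mod_cast hg
  have hdiff : (#(A.image (g • ·) \ A) : ℚ) = #A - #(A.image (g • ·) ∩ A) := by
    rw [← hsplit]; push_cast; ring
  rw [hdiff, ge_iff_le, mul_one_sub, ← mul_div_assoc, ← sq]
  linarith
end

section
/- Let G be a finite group acting transitively on a finite set M, let S be a generating set of G with |S| = n, and let A ⊆ M. Then there exists s ∈ S such that |sA \ A| ≥ (1/k)·|A|·(1 − |A|/|M|), where k is the minimal word length over S of some element g achieving |gA \ A| ≥ |A|(1 − |A|/|M|). In particular, if every element of G is a word of length at most n in S, there exists s ∈ S with |sA \ A| ≥ (1/n)·|A|·(1 − |A|/|M|). -/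
/-!
Since `(gh)A \ A ⊆ g(hA \ A) ∪ (gA \ A)`, the size of `gA \ A` is
subadditive along a word `g = s₁ ⋯ s_k`, so some letter `s_j` moves at least `|gA \ A| / k`
points of `A` out of `A`. On the other hand, by transitivity each `g • a = b` holds for exactly
`|G| / |M|` elements `g`, so on average over `G` the set `gA \ A` has `|A|(1 - |A|/|M|)` elements,
and some `g` does at least that well.
-/

open Finset
open scoped Pointwise

section Subadditivity

variable {G M : Type*} [Group G] [MulAction G M] [DecidableEq M]

theorem card_smul_finset_sdiff (g : G) (A : Finset M) :
    #(g • A \ A) = #{a ∈ A | g • a ∉ A} := by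
  rw [← image_smul, sdiff_eq_filter, filter_image,
    card_image_of_injective _ (MulAction.injective g)]

theorem card_mul_smul_finset_sdiff_le (g h : G) (A : Finset M) :
    #((g * h) • A \ A) ≤ #(g • A \ A) + #(h • A \ A) :=
  calc #((g * h) • A \ A) ≤ #((g * h) • A \ g • A) + #(g • A \ A) :=
        (card_le_card (sdiff_triangle _ _ _)).trans (card_union_le _ _)
    _ = #(h • A \ A) + #(g • A \ A) := by
        rw [mul_smul, ← smul_finset_sdiff, card_smul_finset]
    _ = #(g • A \ A) + #(h • A \ A) := add_comm _ _

theorem card_list_prod_smul_finset_sdiff_le (L : List G) (A : Finset M) :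
    #(L.prod • A \ A) ≤ (L.map fun s => #(s • A \ A)).sum := by
  induction L with
  | nil => simp
  | cons s L ih =>
    rw [List.prod_cons, List.map_cons, List.sum_cons]
    exact (card_mul_smul_finset_sdiff_le s L.prod A).trans (Nat.add_le_add_left ih _)

theorem exists_mem_div_length_le_card_smul_finset_sdiff {L : List G} (hL : L ≠ [])
    (A : Finset M) : ∃ s ∈ L, (#(L.prod • A \ A) : ℚ) / L.length ≤ #(s • A \ A) := by
  refine List.exists_le_of_sum_le hL _ _ ?_
  have hlen : (L.length : ℚ) ≠ 0 := by simpa using hL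
  rw [List.map_const', List.sum_replicate, nsmul_eq_mul, mul_div_cancel₀ _ hlen]
  have := card_list_prod_smul_finset_sdiff_le L A
  push_cast [← Nat.cast_le (α := ℚ), Nat.cast_list_sum, List.map_map] at this
  exact this

end Subadditivity

section Averaging

variable {G M : Type*} [Group G] [Fintype G] [MulAction G M] [MulAction.IsPretransitive G M]
  [DecidableEq M]

theorem card_filter_smul_eq_eq_card_filter_smul_eq (a b b' : M) :
    #{g : G | g • a = b} = #{g : G | g • a = b'} := by
  obtain ⟨h, rfl⟩ := MulAction.exists_smul_eq G b b'
  exact card_equiv (Equiv.mulLeft h) fun g => by simp [mul_smul]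

variable [Fintype M]

theorem card_filter_smul_eq_mul_card (a b : M) :
    #{g : G | g • a = b} * Fintype.card M = Fintype.card G := by
  calc #{g : G | g • a = b} * Fintype.card M = ∑ b' : M, #{g : G | g • a = b'} := by
        rw [sum_congr rfl fun b' _ => card_filter_smul_eq_eq_card_filter_smul_eq a b' b,
          sum_const, card_univ, smul_eq_mul, mul_comm]
    _ = Fintype.card G := by simp [sum_card_fiberwise_eq_card_filter]

theorem card_filter_smul_mem_mul_card (a : M) (A : Finset M) :
    #{g : G | g • a ∈ A} * Fintype.card M = #A * Fintype.card G := by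
  rw [← sum_card_fiberwise_eq_card_filter, sum_mul,
    sum_congr rfl fun b _ => card_filter_smul_eq_mul_card a b, sum_const, smul_eq_mul]

theorem sum_card_smul_finset_sdiff (A : Finset M) :
    ∑ g : G, (#(g • A \ A) : ℚ) =
      Fintype.card G * (#A * (1 - #A / Fintype.card M)) := by
  have double_count : ∑ g : G, #(g • A \ A) = ∑ a ∈ A, #{g : G | g • a ∉ A} := by
    simp only [card_smul_finset_sdiff]
    exact sum_card_bipartiteAbove_eq_sum_card_bipartiteBelow _
  have escaping (a : M) (ha : a ∈ A) :
      (#{g : G | g • a ∉ A} : ℚ) = Fintype.card G * (1 - #A / Fintype.card M) := by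
    have : Nonempty M := ⟨a⟩
    have hsplit : (#{g : G | g • a ∈ A} + #{g : G | g • a ∉ A} : ℚ) = Fintype.card G := by
      exact_mod_cast card_filter_add_card_filter_not _
    have hcount : (#{g : G | g • a ∈ A} * Fintype.card M : ℚ) = #A * Fintype.card G := by
      exact_mod_cast card_filter_smul_mem_mul_card (G := G) a A
    have hM : (Fintype.card M : ℚ) ≠ 0 := by exact_mod_cast Fintype.card_ne_zero
    field_simp
    linear_combination (Fintype.card M : ℚ) * hsplit - hcount
  rw [← Nat.cast_sum, double_count, Nat.cast_sum, sum_congr rfl escaping, sum_const,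
    nsmul_eq_mul]
  ring

theorem exists_le_card_smul_finset_sdiff (A : Finset M) :
    ∃ g : G, (#A : ℚ) * (1 - #A / Fintype.card M) ≤ #(g • A \ A) := by
  obtain ⟨g, -, hg⟩ := exists_le_of_sum_le univ_nonempty
    (f := fun _ : G => (#A : ℚ) * (1 - #A / Fintype.card M))
    (g := fun g : G => (#(g • A \ A) : ℚ))
    (by rw [sum_const, card_univ, nsmul_eq_mul, sum_card_smul_finset_sdiff])
  exact ⟨g, hg⟩

end Averaging

theorem stmt_3_general {G M : Type*} [Group G] [Fintype G] [Fintype M] [DecidableEq M]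
    [MulAction G M] [MulAction.IsPretransitive G M]
    (S : Finset G) (n : ℕ) (hn : 0 < n) (hS : S.card = n) (A : Finset M) :
    (∀ (g : G) (L : List G), (∀ x ∈ L, x ∈ S) → L.prod = g → L ≠ [] →
      (((A.image (g • ·)) \ A).card : ℚ)
          ≥ (A.card : ℚ) * (1 - (A.card : ℚ) / (Fintype.card M : ℚ)) →
      ∃ s ∈ S, (((A.image (s • ·)) \ A).card : ℚ)
          ≥ (1 / (L.length : ℚ)) * (A.card : ℚ)
              * (1 - (A.card : ℚ) / (Fintype.card M : ℚ)))
    ∧ ((∀ g : G, ∃ L : List G, (∀ x ∈ L, x ∈ S) ∧ L.length ≤ n ∧ L.prod = g) →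
      ∃ s ∈ S, (((A.image (s • ·)) \ A).card : ℚ)
          ≥ (1 / (n : ℚ)) * (A.card : ℚ)
              * (1 - (A.card : ℚ) / (Fintype.card M : ℚ))) := by
  simp only [image_smul, div_mul_eq_mul_div, one_mul, ge_iff_le]
  set c : ℚ := #A * (1 - #A / Fintype.card M)
  have hc : 0 ≤ c := mul_nonneg (Nat.cast_nonneg _)
    (sub_nonneg.2 (div_le_one_of_le₀ (by exact_mod_cast card_le_univ A) (Nat.cast_nonneg _)))
  have word_bound : ∀ (g : G) (L : List G), (∀ x ∈ L, x ∈ S) → L.prod = g → L ≠ [] →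
      c ≤ #(g • A \ A) → ∃ s ∈ S, c / L.length ≤ #(s • A \ A) := by
    rintro g L hLS rfl hL hg
    obtain ⟨s, hs, hle⟩ := exists_mem_div_length_le_card_smul_finset_sdiff hL A
    exact ⟨s, hLS s hs, (div_le_div_of_nonneg_right hg (Nat.cast_nonneg _)).trans hle⟩
  refine ⟨word_bound, fun hword => ?_⟩
  obtain ⟨g, hg⟩ := exists_le_card_smul_finset_sdiff (G := G) A
  obtain ⟨L, hLS, hLn, rfl⟩ := hword g
  rcases eq_or_ne L [] with rfl | hL
  · -- `g = 1` moves nothing, so the average `c` vanishes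
    obtain ⟨s, hs⟩ := card_pos.1 (hS ▸ hn)
    have hc0 : c ≤ 0 := by simpa using hg
    exact ⟨s, hs,
      (div_nonpos_of_nonpos_of_nonneg hc0 (Nat.cast_nonneg _)).trans (Nat.cast_nonneg _)⟩
  · obtain ⟨s, hs, hle⟩ := word_bound _ L hLS rfl hL hg
    refine ⟨s, hs, (div_le_div_of_nonneg_left hc ?_ (Nat.cast_le.2 hLn)).trans hle⟩
    exact_mod_cast List.length_pos_iff.2 hL

/-- Aldous' vertex-boundary bound for Cayley graphs.  Let `G` act transitively on a
finite set `M`, let `S` be a generating set of `G` with `|S| = n`, and `A ⊆ M`.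
(i) Whenever `g` achieves `|gA \ A| ≥ |A|(1 − |A|/|M|)` and `g` is a word of length
`k` over `S`, there exists `s ∈ S` with `|sA \ A| ≥ (1/k)·|A|·(1 − |A|/|M|)`.
(ii) In particular, if every element of `G` is a word of length at most `n` in `S`,
there exists `s ∈ S` with `|sA \ A| ≥ (1/n)·|A|·(1 − |A|/|M|)`. -/
theorem stmt_3 {G M : Type*} [Group G] [Fintype G] [Fintype M] [DecidableEq M]
    [DecidableEq G] [MulAction G M] [MulAction.IsPretransitive G M]
    (S : Finset G) (n : ℕ) (hn : 0 < n) (hS : S.card = n)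
    (hgen : Subgroup.closure (S : Set G) = ⊤) (A : Finset M) :
    (∀ (g : G) (L : List G), (∀ x ∈ L, x ∈ S) → L.prod = g → L ≠ [] →
      (((A.image (g • ·)) \ A).card : ℚ)
          ≥ (A.card : ℚ) * (1 - (A.card : ℚ) / (Fintype.card M : ℚ)) →
      ∃ s ∈ S, (((A.image (s • ·)) \ A).card : ℚ)
          ≥ (1 / (L.length : ℚ)) * (A.card : ℚ)
              * (1 - (A.card : ℚ) / (Fintype.card M : ℚ)))
    ∧ ((∀ g : G, ∃ L : List G, (∀ x ∈ L, x ∈ S) ∧ L.length ≤ n ∧ L.prod = g) →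
      ∃ s ∈ S, (((A.image (s • ·)) \ A).card : ℚ)
          ≥ (1 / (n : ℚ)) * (A.card : ℚ)
              * (1 - (A.card : ℚ) / (Fintype.card M : ℚ))) :=
  stmt_3_general S n hn hS A
end
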